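/- arXiv:1404.2976 — 3 statements merged into one kernel-verified Lean document; each statement's English description precedes it below -/
import Mathlib

section
/- Let G(ξ₁, ξ₂) = 2ξ₂ + Λ₀(ξ₁² + ξ₂²) − (a/4)(ξ₁² + ξ₂²)². If θ'(s) = −Λ₀ + (a/2)(ξ₁(s)² + ξ₂(s)²) holds along the curve, then the function s ↦ G(ξ₁(s), ξ₂(s)) is constant; i.e., the pair (ξ₁, ξ₂) satisfies Hamilton's equations ξ₁' = (1/2)∂G/∂ξ₂, ξ₂' = −(1/2)∂G/∂ξ₁ and G is a conserved quantity. -/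
open Real

/-- If `θ' = -Λ₀ + (a/2)(ξ₁² + ξ₂²)` along a unit-speed curve, then `(ξ₁, ξ₂)`
satisfies Hamilton's equations `ξ₁' = (1/2)∂G/∂ξ₂`, `ξ₂' = -(1/2)∂G/∂ξ₁` for
`G(ξ₁,ξ₂) = 2ξ₂ + Λ₀(ξ₁²+ξ₂²) - (a/4)(ξ₁²+ξ₂²)²`, and `G(ξ₁(s), ξ₂(s))` is constant. -/
theorem stmt_2 (a Λ₀ : ℝ) (x y θ : ℝ → ℝ) (ξ₁ ξ₂ : ℝ → ℝ) (G : ℝ → ℝ → ℝ)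
    (hG : ∀ u v, G u v = 2 * v + Λ₀ * (u ^ 2 + v ^ 2) - a / 4 * (u ^ 2 + v ^ 2) ^ 2)
    (hx : ∀ s, HasDerivAt x (Real.cos (θ s)) s)
    (hy : ∀ s, HasDerivAt y (Real.sin (θ s)) s)
    (hξ₁ : ∀ s, ξ₁ s = x s * Real.cos (θ s) + y s * Real.sin (θ s))
    (hξ₂ : ∀ s, ξ₂ s = x s * Real.sin (θ s) - y s * Real.cos (θ s))
    (hθ : ∀ s, HasDerivAt θ (-Λ₀ + a / 2 * ((ξ₁ s) ^ 2 + (ξ₂ s) ^ 2)) s) :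
    (∀ s, HasDerivAt ξ₁
        (1 + ξ₂ s * Λ₀ - 1 / 2 * ξ₂ s * a * ((ξ₁ s) ^ 2 + (ξ₂ s) ^ 2)) s) ∧
    (∀ s, HasDerivAt ξ₂
        (-(ξ₁ s) * Λ₀ + 1 / 2 * a * ξ₁ s * ((ξ₁ s) ^ 2 + (ξ₂ s) ^ 2)) s) ∧
    (∀ s t : ℝ, G (ξ₁ s) (ξ₂ s) = G (ξ₁ t) (ξ₂ t)) := by
  have hΞ₁ : ξ₁ = fun s => x s * Real.cos (θ s) + y s * Real.sin (θ s) := funext hξ₁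
  have hΞ₂ : ξ₂ = fun s => x s * Real.sin (θ s) - y s * Real.cos (θ s) := funext hξ₂
  have h1 : ∀ s, HasDerivAt ξ₁
      (1 + ξ₂ s * Λ₀ - 1 / 2 * ξ₂ s * a * ((ξ₁ s) ^ 2 + (ξ₂ s) ^ 2)) s := by
    intro s
    have H := ((hx s).mul (hθ s).cos).add ((hy s).mul (hθ s).sin)
    rw [hΞ₁]
    convert H using 1
    rotate_left 3
    have hs := Real.sin_sq_add_cos_sq (θ s)
    rw [hξ₁ s, hξ₂ s]
    nlinarith [hs]
    all_goals rfl
  have h2 : ∀ s, HasDerivAt ξ₂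
      (-(ξ₁ s) * Λ₀ + 1 / 2 * a * ξ₁ s * ((ξ₁ s) ^ 2 + (ξ₂ s) ^ 2)) s := by
    intro s
    have H := ((hx s).mul (hθ s).sin).sub ((hy s).mul (hθ s).cos)
    rw [hΞ₂]
    convert H using 1
    rotate_left 3
    have hs := Real.sin_sq_add_cos_sq (θ s)
    rw [hξ₁ s, hξ₂ s]
    nlinarith [hs]
    all_goals rfl
  refine ⟨h1, h2, ?_⟩
  have hg : ∀ s, HasDerivAt (fun s => G (ξ₁ s) (ξ₂ s)) 0 s := by
    intro s
    have hGfun : (fun s => G (ξ₁ s) (ξ₂ s)) =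
        fun s => 2 * ξ₂ s + Λ₀ * ((ξ₁ s) ^ 2 + (ξ₂ s) ^ 2)
          - a / 4 * ((ξ₁ s) ^ 2 + (ξ₂ s) ^ 2) ^ 2 := by
      funext s; rw [hG]
    set d1 := 1 + ξ₂ s * Λ₀ - 1 / 2 * ξ₂ s * a * ((ξ₁ s) ^ 2 + (ξ₂ s) ^ 2)
    set d2 := -(ξ₁ s) * Λ₀ + 1 / 2 * a * ξ₁ s * ((ξ₁ s) ^ 2 + (ξ₂ s) ^ 2)
    have hr : HasDerivAt (fun s => (ξ₁ s) ^ 2 + (ξ₂ s) ^ 2)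
        ((2 : ℕ) * (ξ₁ s) ^ (2 - 1) * d1 + (2 : ℕ) * (ξ₂ s) ^ (2 - 1) * d2) s :=
      ((h1 s).pow 2).add ((h2 s).pow 2)
    have H := (((h2 s).const_mul 2).add (hr.const_mul Λ₀)).sub ((hr.pow 2).const_mul (a / 4))
    rw [hGfun]
    convert H using 1
    rotate_left 3
    simp only [d1, d2]
    push_cast
    ring
    all_goals rfl
  intro s t
  have : ∀ u v : ℝ, G (ξ₁ u) (ξ₂ u) = G (ξ₁ v) (ξ₂ v) := by
    intro u v
    have hc := is_const_of_deriv_eq_zero (f := fun s => G (ξ₁ s) (ξ₂ s))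
      (fun s => (hg s).differentiableAt) (fun s => (hg s).deriv) u v
    exact hc
  exact this s t
end

section
/- Let q(r, a, C) = −16C² + 64r + 32Cr − 16r² − 8aCr² + 8ar³ − a²r⁴ with a ≠ 0 (the case Λ₀ = 1). Then q has no negative real roots: q(r, a, C) = 0 and r < 0 is impossible. -/
/-- For `a ≠ 0`, the polynomial
`q(r) = -16C² + 64r + 32Cr - 16r² - 8aCr² + 8ar³ - a²r⁴` has no negative real
roots. -/
theorem stmt_11 (a C : ℝ) (ha : a ≠ 0) :
    ∀ r : ℝ, r < 0 →
      -16 * C ^ 2 + 64 * r + 32 * C * r - 16 * r ^ 2 - 8 * a * C * r ^ 2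
        + 8 * a * r ^ 3 - a ^ 2 * r ^ 4 ≠ 0 := by
  intro r hr h
  nlinarith [sq_nonneg (4*C - 4*r + a*r^2), hr]
end

section
/- Along the generating curve of an equilibrium cylinder, the function ξ₁ satisfies the Jacobi-type equation ξ₁'' + (κ² + aξ₂)ξ₁ = 0. -/
open Real

/-- Along the generating curve of an equilibrium cylinder (unit-speed, with
curvature `κ = Λ₀ - (a/2)(x² + y²)`), the function `ξ₁ = x cos θ + y sin θ`
satisfies the Jacobi-type equation `ξ₁'' + (κ² + aξ₂)ξ₁ = 0`. -/
theorem stmt_14 (a Λ₀ : ℝ) (x y θ κ : ℝ → ℝ)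
    (hx : ∀ s, HasDerivAt x (Real.cos (θ s)) s)
    (hy : ∀ s, HasDerivAt y (Real.sin (θ s)) s)
    (hθ : ∀ s, HasDerivAt θ (-(κ s)) s)
    (hκ : ∀ s, κ s = Λ₀ - a / 2 * ((x s) ^ 2 + (y s) ^ 2))
    (ξ₁ ξ₂ : ℝ → ℝ)
    (hξ₁ : ∀ s, ξ₁ s = x s * Real.cos (θ s) + y s * Real.sin (θ s))
    (hξ₂ : ∀ s, ξ₂ s = x s * Real.sin (θ s) - y s * Real.cos (θ s)) :
    ∀ s, deriv (deriv ξ₁) s + ((κ s) ^ 2 + a * ξ₂ s) * ξ₁ s = 0 := by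
  have hcos : ∀ t, HasDerivAt (fun u => Real.cos (θ u)) (Real.sin (θ t) * κ t) t := by
    intro t
    have h := (Real.hasDerivAt_cos (θ t)).comp t (hθ t)
    refine h.congr_deriv (Eq.symm ?_)
    ring
  have hsin : ∀ t, HasDerivAt (fun u => Real.sin (θ u)) (-(Real.cos (θ t) * κ t)) t := by
    intro t
    have h := (Real.hasDerivAt_sin (θ t)).comp t (hθ t)
    refine h.congr_deriv (Eq.symm ?_)
    ring
  have h1 : ∀ t, HasDerivAt ξ₁ (1 + κ t * ξ₂ t) t := by
    intro t
    have h := ((hx t).mul (hcos t)).add ((hy t).mul (hsin t))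
    have heq : ξ₁ = fun u => x u * Real.cos (θ u) + y u * Real.sin (θ u) := funext hξ₁
    rw [heq]
    refine h.congr_deriv (Eq.symm ?_)
    rw [hξ₂]
    linear_combination -Real.sin_sq_add_cos_sq (θ t)
  have h2 : ∀ t, HasDerivAt ξ₂ (-(κ t * ξ₁ t)) t := by
    intro t
    have h := ((hx t).mul (hsin t)).sub ((hy t).mul (hcos t))
    have heq : ξ₂ = fun u => x u * Real.sin (θ u) - y u * Real.cos (θ u) := funext hξ₂
    rw [heq]
    refine h.congr_deriv (Eq.symm ?_)
    rw [hξ₁]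
    ring
  have hκ' : ∀ t, HasDerivAt κ (-(a * ξ₁ t)) t := by
    intro t
    have heq : κ = fun u => Λ₀ - a / 2 * ((x u) ^ 2 + (y u) ^ 2) := funext hκ
    rw [heq]
    have h := ((((hx t).pow 2).add ((hy t).pow 2)).const_mul (a / 2)).const_sub Λ₀
    refine h.congr_deriv (Eq.symm ?_)
    rw [hξ₁]
    ring
  have hd1 : deriv ξ₁ = fun t => 1 + κ t * ξ₂ t := funext fun t => (h1 t).deriv
  intro s
  have h3 : HasDerivAt (fun t => 1 + κ t * ξ₂ t)
      (-(a * ξ₁ s) * ξ₂ s + κ s * -(κ s * ξ₁ s)) s :=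
    ((hκ' s).mul (h2 s)).const_add 1
  rw [hd1, h3.deriv]
  ring
end
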